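/- Miracle identity for Nikishin systems: for measures σ₁,…,σⱼ (j ≥ 2) supported on intervals with Δᵢ ∩ Δᵢ₊₁ = ∅, and z ∉ Δ₁ ∪ Δⱼ, one has ŝ_{1,j}(z) − ŝ_{1,j−1}(z)ŝ_{j,j}(z) + ŝ_{1,j−2}(z)ŝ_{j,j−1}(z) − … + (−1)^{j−1} ŝ_{1,1}(z)ŝ_{j,2}(z) + (−1)^j ŝ_{j,1}(z) = 0, where s_{1,k} = ⟨σ₁,…,σₖ⟩ and s_{j,k} = ⟨σⱼ,σ_{j−1},…,σₖ⟩. -/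

import Mathlib

/-!
Write `ŝ_w` for the chain transform whose innermost weight is `(w - ·)⁻¹`. Then
`(w - z) ŝ_w(z) = ∫⋯∫ (w - z) / ((z - x₁)(x₁ - x₂)⋯(xₚ₋₁ - xₚ)(w - xₚ))`, and telescoping
`w - z = (w - xₚ) + Σ (xᵢ₊₁ - xᵢ) + (x₁ - z)` splits it into an alternating sum of products
`ŝ_{⟨σ₁,…,σᵢ⟩}(z) ŝ_{⟨σₚ,…,σᵢ₊₁⟩}(w)`. At `w = z` the left side vanishes, which is the identity.

The splitting is proved by induction on the chain, peeling off `σ₁`: the part of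
`(w - x₁)/(z - x₁) = (w - z)/(z - x₁) + 1` without a kernel leaves a chain integrated against
`σ₁`, and Fubini with the antisymmetric kernel `1/(x - y)` reverses it into a chain at `w`.
Disjointness of consecutive supports keeps every kernel bounded, so all integrands are continuous
functions on compact sets.
-/

open MeasureTheory

/-- Topological support of a measure on ℝ. -/
def msupport (σ : Measure ℝ) : Set ℝ := {x : ℝ | ∀ U ∈ nhds x, σ U ≠ 0}

/-- Iterated Cauchy transform of a chain of measures:
`chainT σ [i₁,…,iₚ]` is the Cauchy transform of `⟨σ_{i₁},…,σ_{iₚ}⟩`. -/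
noncomputable def chainT (σ : ℕ → Measure ℝ) : List ℕ → ℂ → ℂ
  | [] => fun _ => 1
  | [i] => fun z => ∫ x, (z - (x : ℂ))⁻¹ ∂(σ i)
  | i :: j :: l => fun z => ∫ x, chainT σ (j :: l) x / (z - x) ∂(σ i)

/-- `ŝ_{j,k} = ⟨σⱼ,σ_{j+1},…,σₖ⟩^` (increasing chain, `j ≤ k`). -/
noncomputable def shatU (σ : ℕ → Measure ℝ) (j k : ℕ) : ℂ → ℂ :=
  chainT σ (List.range' j (k + 1 - j))

/-- `ŝ_{j,k} = ⟨σⱼ,σ_{j-1},…,σₖ⟩^` (decreasing chain, `j ≥ k`). -/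
noncomputable def shatD (σ : ℕ → Measure ℝ) (j k : ℕ) : ℂ → ℂ :=
  chainT σ (List.range' k (j + 1 - k)).reverse

open Set Complex

section Compact

variable {X E : Type*} [TopologicalSpace X] [T2Space X] [MeasurableSpace X]
  [OpensMeasurableSpace X] [NormedAddCommGroup E] {μ : Measure X} [IsFiniteMeasure μ]
  {K : Set X} {g : X → E}

theorem ContinuousOn.integrable_of_ae_mem (hg : ContinuousOn g K) (hK : IsCompact K)
    (hμ : ∀ᵐ x ∂μ, x ∈ K) : Integrable g μ :=
  Measure.restrict_eq_self_of_ae_mem hμ ▸ hg.integrableOn_compact hK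

end Compact

theorem msupport_eq_support (μ : Measure ℝ) : msupport μ = μ.support := by
  ext x
  simp [msupport, Measure.mem_support_iff_forall, pos_iff_ne_zero]

theorem ae_mem_of_msupport_subset {μ : Measure ℝ} {K : Set ℝ} (h : msupport μ ⊆ K) :
    ∀ᵐ x ∂μ, x ∈ K :=
  Filter.mem_of_superset Measure.support_mem_ae (msupport_eq_support μ ▸ h)

theorem mapsTo_ofReal_compl_image {K L : Set ℝ} (h : Disjoint K L) :
    MapsTo ofReal K (ofReal '' L)ᶜ := by
  rintro x hx ⟨y, hy, hyx⟩
  exact disjoint_left.1 h hx (ofReal_injective hyx ▸ hy)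

theorem continuousOn_inv_sub_ofReal {K : Set ℝ} {z : ℂ} (hz : z ∉ ofReal '' K) :
    ContinuousOn (fun x : ℝ => (z - x)⁻¹) K :=
  (continuous_const.sub continuous_ofReal).continuousOn.inv₀ fun x hx =>
    sub_ne_zero.2 fun h => hz ⟨x, hx, h.symm⟩

noncomputable def cauchyTransform (μ : Measure ℝ) (f : ℂ → ℂ) (z : ℂ) : ℂ :=
  ∫ x, f x / (z - x) ∂μ

section CauchyTransform

variable {μ : Measure ℝ} [IsFiniteMeasure μ] {K : Set ℝ} {f : ℂ → ℂ}

theorem integrable_div_sub_ofReal (hK : IsCompact K) (hμ : ∀ᵐ x ∂μ, x ∈ K)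
    (hf : ContinuousOn (fun x : ℝ => f x) K) {z : ℂ} (hz : z ∉ ofReal '' K) :
    Integrable (fun x : ℝ => f x / (z - x)) μ := by
  simp_rw [div_eq_mul_inv]
  exact (hf.mul (continuousOn_inv_sub_ofReal hz)).integrable_of_ae_mem hK hμ

theorem continuousOn_cauchyTransform (hK : IsCompact K) (hμ : ∀ᵐ x ∂μ, x ∈ K)
    (hf : ContinuousOn (fun x : ℝ => f x) K) :
    ContinuousOn (cauchyTransform μ f) (ofReal '' K)ᶜ := by
  intro z₀ hz₀
  obtain ⟨ε, hε, hball⟩ :=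
    Metric.isOpen_iff.1 (hK.image continuous_ofReal).isClosed.isOpen_compl z₀ hz₀
  set N := Metric.closedBall z₀ (ε / 2)
  have hN : N ⊆ (ofReal '' K)ᶜ :=
    (Metric.closedBall_subset_ball (half_lt_self hε)).trans hball
  have hcont : ContinuousOn (fun p : ℂ × ℝ => f p.2 / (p.1 - p.2)) (N ×ˢ K) :=
    (hf.comp continuousOn_snd fun p hp => hp.2).div (by fun_prop) fun p hp =>
      sub_ne_zero.2 fun h => hN hp.1 ⟨p.2, hp.2, h.symm⟩
  obtain ⟨M, hM⟩ := ((isCompact_closedBall z₀ (ε / 2)).prod hK).exists_bound_of_continuousOn hcont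
  have hNnhds : N ∈ nhds z₀ := Metric.closedBall_mem_nhds z₀ (half_pos hε)
  refine (continuousAt_of_dominated (bound := fun _ => M) ?_ ?_ (integrable_const M)
    ?_).continuousWithinAt
  · filter_upwards [hNnhds] with z hz
    exact (integrable_div_sub_ofReal hK hμ hf (hN hz)).aestronglyMeasurable
  · filter_upwards [hNnhds] with z hz
    filter_upwards [hμ] with x hx using hM (z, x) ⟨hz, hx⟩
  · filter_upwards [hμ] with x hx
    exact continuousAt_const.div (continuousAt_id.sub continuousAt_const)
      (sub_ne_zero.2 fun h => hz₀ ⟨x, hx, h.symm⟩)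

theorem integral_mul_cauchyTransform {ν : Measure ℝ} [IsFiniteMeasure ν] {L : Set ℝ}
    (hK : IsCompact K) (hL : IsCompact L) (hKL : Disjoint K L) (hμ : ∀ᵐ x ∂μ, x ∈ K)
    (hν : ∀ᵐ y ∂ν, y ∈ L) {h : ℂ → ℂ} (hf : ContinuousOn (fun x : ℝ => f x) K)
    (hh : ContinuousOn (fun y : ℝ => h y) L) :
    ∫ x, f x * cauchyTransform ν h x ∂μ = -∫ y, cauchyTransform μ f y * h y ∂ν := by
  have hprod : Integrable (fun p : ℝ × ℝ => f p.1 * (h p.2 / (p.1 - p.2))) (μ.prod ν) := by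
    refine ContinuousOn.integrable_of_ae_mem ?_ (hK.prod hL) ?_
    · refine (hf.comp continuousOn_fst fun p hp => hp.1).mul
        ((hh.comp continuousOn_snd fun p hp => hp.2).div (by fun_prop) fun p hp => ?_)
      exact sub_ne_zero.2 fun h => disjoint_left.1 hKL hp.1 (ofReal_injective h ▸ hp.2)
    · rw [Measure.ae_prod_mem_iff_ae_ae_mem (hK.prod hL).measurableSet]
      filter_upwards [hμ] with x hx
      filter_upwards [hν] with y hy using ⟨hx, hy⟩
  calc ∫ x, f x * cauchyTransform ν h x ∂μ
      = ∫ x, ∫ y, f x * (h y / (x - y)) ∂ν ∂μ := by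
        simp only [cauchyTransform, integral_const_mul]
    _ = ∫ y, ∫ x, f x * (h y / (x - y)) ∂μ ∂ν := integral_integral_swap hprod
    _ = -∫ y, cauchyTransform μ f y * h y ∂ν := by
        simp only [cauchyTransform, ← integral_mul_const, ← integral_neg]
        congr 1 with y
        congr 1 with x
        rw [← neg_sub (x : ℂ) y, div_neg]
        ring

end CauchyTransform

section Chain

variable {ι : Type*} (σ : ι → Measure ℝ)

/-- `cauchyChain σ f [i₁, …, iₚ] z`
`= ∫⋯∫ f(xₚ) / ((z - x₁)(x₁ - x₂)⋯(xₚ₋₁ - xₚ)) dσ_{iₚ}(xₚ)⋯dσ_{i₁}(x₁)`. -/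
noncomputable def cauchyChain (f : ℂ → ℂ) : List ι → ℂ → ℂ
  | [] => f
  | i :: l => cauchyTransform (σ i) (cauchyChain f l)

@[simp]
theorem cauchyChain_nil (f : ℂ → ℂ) : cauchyChain σ f [] = f := rfl

@[simp]
theorem cauchyChain_cons (f : ℂ → ℂ) (i : ι) (l : List ι) :
    cauchyChain σ f (i :: l) = cauchyTransform (σ i) (cauchyChain σ f l) := rfl

theorem cauchyChain_append_singleton (f : ℂ → ℂ) (l : List ι) (i : ι) :
    cauchyChain σ f (l ++ [i]) = cauchyChain σ (cauchyTransform (σ i) f) l := by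
  induction l with
  | nil => rfl
  | cons k l ih => rw [List.cons_append, cauchyChain_cons, ih, cauchyChain_cons]

theorem chainT_eq_cauchyChain (σ : ℕ → Measure ℝ) : ∀ l, chainT σ l = cauchyChain σ 1 l
  | [] => rfl
  | [i] => by ext z; simp [chainT, cauchyTransform]
  | i :: k :: l => by
    ext z
    rw [chainT, chainT_eq_cauchyChain σ (k :: l), cauchyChain_cons]
    rfl

structure IsNikishinChain (K : ι → Set ℝ) (l : List ι) : Prop where
  isCompact : ∀ i ∈ l, IsCompact (K i)
  ae_mem : ∀ i ∈ l, ∀ᵐ x ∂σ i, x ∈ K i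
  isChain : l.IsChain fun i k => Disjoint (K i) (K k)

namespace IsNikishinChain

variable {σ} {K : ι → Set ℝ} {a b : ι} {l : List ι}

theorem tail (h : IsNikishinChain σ K (a :: l)) : IsNikishinChain σ K l :=
  ⟨fun i hi => h.isCompact i (List.mem_cons_of_mem a hi),
    fun i hi => h.ae_mem i (List.mem_cons_of_mem a hi), h.isChain.tail⟩

theorem take (h : IsNikishinChain σ K l) (n : ℕ) : IsNikishinChain σ K (l.take n) :=
  ⟨fun i hi => h.isCompact i (List.mem_of_mem_take hi),
    fun i hi => h.ae_mem i (List.mem_of_mem_take hi), h.isChain.take n⟩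

theorem disjoint (h : IsNikishinChain σ K (a :: b :: l)) : Disjoint (K a) (K b) :=
  (List.isChain_cons_cons.1 h.isChain).1

variable [∀ i, IsFiniteMeasure (σ i)]

theorem continuousOn_cauchyChain (h : IsNikishinChain σ K (a :: l)) {f : ℂ → ℂ}
    (hf : ContinuousOn (fun x : ℝ => f x) (K ((a :: l).getLast (List.cons_ne_nil a l)))) :
    ContinuousOn (fun x : ℝ => cauchyChain σ f l x) (K a) := by
  induction l generalizing a with
  | nil => simpa using hf
  | cons b l ih =>
    have hb := ih h.tail (by simpa using hf)
    exact (continuousOn_cauchyTransform (h.isCompact b (by simp)) (h.ae_mem b (by simp)) hb).comp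
      continuous_ofReal.continuousOn (mapsTo_ofReal_compl_image h.disjoint)

theorem integral_mul_cauchyChain (h : IsNikishinChain σ K (a :: l)) {g : ℂ → ℂ}
    (hg : ContinuousOn (fun x : ℝ => g x) (K a)) {w : ℂ}
    (hw : w ∉ ofReal '' K ((a :: l).getLast (List.cons_ne_nil a l))) :
    ∫ x, g x * cauchyChain σ (fun u => (w - u)⁻¹) l x ∂σ a
      = (-1) ^ l.length * cauchyChain σ (cauchyTransform (σ a) g) l.reverse w := by
  induction l generalizing a g with
  | nil => simp [cauchyTransform, div_eq_mul_inv]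
  | cons b l ih =>
    have hw' : w ∉ ofReal '' K ((b :: l).getLast (List.cons_ne_nil b l)) := by simpa using hw
    have hKa := h.isCompact a (by simp)
    have hμa := h.ae_mem a (by simp)
    have hTg : ContinuousOn (fun y : ℝ => cauchyTransform (σ a) g y) (K b) :=
      (continuousOn_cauchyTransform hKa hμa hg).comp continuous_ofReal.continuousOn
        (mapsTo_ofReal_compl_image h.disjoint.symm)
    have hF := h.tail.continuousOn_cauchyChain (f := fun u => (w - u)⁻¹)
      (continuousOn_inv_sub_ofReal hw')
    rw [cauchyChain_cons, integral_mul_cauchyTransform hKa (h.isCompact b (by simp)) h.disjoint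
      hμa (h.ae_mem b (by simp)) hg hF, ih h.tail hTg hw', List.reverse_cons,
      cauchyChain_append_singleton, List.length_cons, pow_succ]
    ring

end IsNikishinChain

end Chain

section SplitSum

variable {ι : Type*} (σ : ι → Measure ℝ)

noncomputable def cauchyChainSplitSum (l : List ι) (z w : ℂ) : ℂ :=
  ∑ i ∈ Finset.range (l.length + 1),
    (-1) ^ (l.length - i) * cauchyChain σ 1 (l.take i) z * cauchyChain σ 1 (l.drop i).reverse w

variable {σ} [∀ i, IsFiniteMeasure (σ i)] {K : ι → Set ℝ} {a : ι} {l : List ι} {z w : ℂ}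

theorem cauchyChainSplitSum_cons (h : IsNikishinChain σ K (a :: l)) (hz : z ∉ ofReal '' K a) :
    cauchyChainSplitSum σ (a :: l) z w
      = ∫ x, cauchyChainSplitSum σ l x w / (z - x) ∂σ a
        + (-1) ^ (l.length + 1) * cauchyChain σ 1 (a :: l).reverse w := by
  have hint : ∀ k ∈ Finset.range (l.length + 1), Integrable (fun x : ℝ =>
      (-1) ^ (l.length - k) * (cauchyChain σ 1 (l.take k) x / (z - x))
        * cauchyChain σ 1 (l.drop k).reverse w) (σ a) := fun k _ =>
    ((integrable_div_sub_ofReal (h.isCompact a (by simp)) (h.ae_mem a (by simp))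
      ((h.take (k + 1)).continuousOn_cauchyChain continuousOn_const) hz).const_mul _).mul_const _
  rw [cauchyChainSplitSum, List.length_cons, Finset.sum_range_succ']
  simp only [List.take_succ_cons, List.drop_succ_cons, Nat.add_sub_add_right, List.take_zero,
    List.drop_zero, cauchyChain_cons, cauchyChain_nil, Pi.one_apply, Nat.sub_zero, mul_one]
  congr 1
  simp only [cauchyTransform, ← integral_const_mul, ← integral_mul_const]
  rw [← integral_finsetSum _ hint]
  congr 1 with x
  rw [cauchyChainSplitSum, Finset.sum_div]
  congr 1 with k
  ring

theorem IsNikishinChain.sub_mul_cauchyChain_cons (h : IsNikishinChain σ K (a :: l))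
    (hz : z ∉ ofReal '' K a) (hw : w ∉ ofReal '' K ((a :: l).getLast (List.cons_ne_nil a l)))
    (hl : ∀ᵐ x : ℝ ∂σ a,
      (w - x) * cauchyChain σ (fun u => (w - u)⁻¹) l x = cauchyChainSplitSum σ l x w) :
    (w - z) * cauchyChain σ (fun u => (w - u)⁻¹) (a :: l) z
      = cauchyChainSplitSum σ (a :: l) z w := by
  have hKa := h.isCompact a (by simp)
  have hμa := h.ae_mem a (by simp)
  have hF := h.continuousOn_cauchyChain (f := fun u => (w - u)⁻¹) (continuousOn_inv_sub_ofReal hw)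
  have hsplit : ∀ᵐ x : ℝ ∂σ a, cauchyChainSplitSum σ l x w / (z - x)
      = (w - z) * (cauchyChain σ (fun u => (w - u)⁻¹) l x / (z - x))
        + cauchyChain σ (fun u => (w - u)⁻¹) l x := by
    filter_upwards [hl, hμa] with x hx hxK
    have hzx : z - x ≠ 0 := sub_ne_zero.2 fun h => hz ⟨x, hxK, h.symm⟩
    rw [← hx]
    field_simp
    ring
  have hflip := h.integral_mul_cauchyChain (g := 1) continuousOn_const hw
  simp only [Pi.one_apply, one_mul] at hflip
  rw [cauchyChainSplitSum_cons h hz, integral_congr_ae hsplit,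
    integral_add ((integrable_div_sub_ofReal hKa hμa hF hz).const_mul _)
      (hF.integrable_of_ae_mem hKa hμa),
    integral_const_mul, hflip, List.reverse_cons, cauchyChain_append_singleton, pow_succ,
    cauchyChain_cons, cauchyTransform]
  ring

theorem IsNikishinChain.sub_mul_cauchyChain_eq_splitSum (h : IsNikishinChain σ K (a :: l))
    (hz : z ∉ ofReal '' K a) (hw : w ∉ ofReal '' K ((a :: l).getLast (List.cons_ne_nil a l))) :
    (w - z) * cauchyChain σ (fun u => (w - u)⁻¹) (a :: l) z
      = cauchyChainSplitSum σ (a :: l) z w := by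
  induction l generalizing a z with
  | nil =>
    refine h.sub_mul_cauchyChain_cons hz hw ?_
    filter_upwards [h.ae_mem a (by simp)] with x hx
    have hwx : w - x ≠ 0 := sub_ne_zero.2 fun h => hw ⟨x, hx, h.symm⟩
    simp [cauchyChainSplitSum, hwx]
  | cons b l ih =>
    refine h.sub_mul_cauchyChain_cons hz hw ?_
    filter_upwards [h.ae_mem a (by simp)] with x hx
    exact ih h.tail (mapsTo_ofReal_compl_image h.disjoint hx) (by simpa using hw)

end SplitSum

theorem cauchyChainSplitSum_range'_one (σ : ℕ → Measure ℝ) {j : ℕ} (hj : 1 ≤ j) (z w : ℂ) :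
    cauchyChainSplitSum σ (List.range' 1 j) z w
      = shatU σ 1 j z
        + ∑ i ∈ Finset.Icc 1 (j - 1), (-1 : ℂ) ^ i * shatU σ 1 (j - i) z * shatD σ j (j - i + 1) w
        + (-1 : ℂ) ^ j * shatD σ j 1 w := by
  have hterm : ∀ i ∈ Finset.range (j + 1),
      (-1 : ℂ) ^ (j - (j + 1 - 1 - i)) * cauchyChain σ 1 ((List.range' 1 j).take (j + 1 - 1 - i)) z
        * cauchyChain σ 1 ((List.range' 1 j).drop (j + 1 - 1 - i)).reverse w
      = (-1 : ℂ) ^ i * shatU σ 1 (j - i) z * shatD σ j (j - i + 1) w := by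
    intro i hi
    have hij : i ≤ j := Nat.lt_succ_iff.1 (Finset.mem_range.1 hi)
    rw [List.take_range'_of_length_ge (by omega), List.drop_range', shatU, shatD,
      chainT_eq_cauchyChain, chainT_eq_cauchyChain]
    congr 4 <;> omega
  have hIcc : Finset.Icc 1 (j - 1) = Finset.Ico 1 j := by
    ext i
    simp only [Finset.mem_Icc, Finset.mem_Ico]
    omega
  rw [cauchyChainSplitSum, List.length_range', ← Finset.sum_range_reflect,
    Finset.sum_congr rfl hterm, Finset.sum_range_succ, Finset.sum_range_eq_add_Ico _ hj, hIcc]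
  simp [shatU, shatD, chainT]

theorem stmt12_general (j : ℕ) (hj : 2 ≤ j) (A B : ℕ → ℝ)
    (hdisj : ∀ i, 1 ≤ i → i < j → Disjoint (Set.Icc (A i) (B i)) (Set.Icc (A (i+1)) (B (i+1))))
    (σ : ℕ → Measure ℝ) [∀ i, IsFiniteMeasure (σ i)]
    (hsupp : ∀ i, 1 ≤ i → i ≤ j → msupport (σ i) ⊆ Set.Icc (A i) (B i)) :
    ∀ z : ℂ, z ∉ (Set.Icc (A 1) (B 1)).image ((↑) : ℝ → ℂ) →
      z ∉ (Set.Icc (A j) (B j)).image ((↑) : ℝ → ℂ) →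
      shatU σ 1 j z
        + ∑ i ∈ Finset.Icc 1 (j - 1), (-1 : ℂ) ^ i * shatU σ 1 (j - i) z * shatD σ j (j - i + 1) z
        + (-1 : ℂ) ^ j * shatD σ j 1 z = 0 := by
  intro z hz₁ hzj
  obtain ⟨m, rfl⟩ : ∃ m, j = m + 1 := ⟨j - 1, by omega⟩
  have hrange : List.range' 1 (m + 1) = 1 :: List.range' 2 m := List.range'_succ
  have hmem : ∀ i ∈ List.range' 1 (m + 1), 1 ≤ i ∧ i ≤ m + 1 := fun i hi => by
    rw [List.mem_range'_1] at hi
    omega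
  have hchain : IsNikishinChain σ (fun i => Icc (A i) (B i)) (1 :: List.range' 2 m) := by
    rw [← hrange]
    refine ⟨fun i _ => isCompact_Icc, fun i hi => ae_mem_of_msupport_subset
      (hsupp i (hmem i hi).1 (hmem i hi).2), ?_⟩
    refine (List.isChain_range' 1 (m + 1) 1).imp_of_mem_imp fun i k hi hk hik => ?_
    subst hik
    exact hdisj i (hmem i hi).1 (by linarith [(hmem _ hk).2])
  have hlast : (1 :: List.range' 2 m).getLast (List.cons_ne_nil _ _) = m + 1 := by
    simp only [← hrange, List.getLast_range']
    omega
  have key := hchain.sub_mul_cauchyChain_eq_splitSum hz₁ (hlast ▸ hzj)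
  rw [sub_self, zero_mul, ← hrange, cauchyChainSplitSum_range'_one σ (by omega)] at key
  exact key.symm

/-- miracle identity: for `j ≥ 2` and `z ∉ Δ₁ ∪ Δⱼ`,
`ŝ_{1,j}(z) + Σ_{i=1}^{j-1} (-1)^i ŝ_{1,j-i}(z) ŝ_{j,j-i+1}(z) + (-1)^j ŝ_{j,1}(z) = 0`. -/
theorem stmt12 (j : ℕ) (hj : 2 ≤ j) (A B : ℕ → ℝ) (hAB : ∀ i, A i ≤ B i)
    (hdisj : ∀ i, 1 ≤ i → i < j → Disjoint (Set.Icc (A i) (B i)) (Set.Icc (A (i+1)) (B (i+1))))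
    (σ : ℕ → Measure ℝ) [∀ i, IsFiniteMeasure (σ i)]
    (hsupp : ∀ i, 1 ≤ i → i ≤ j → msupport (σ i) ⊆ Set.Icc (A i) (B i))
    (hinf : ∀ i, 1 ≤ i → i ≤ j → (msupport (σ i)).Infinite) :
    ∀ z : ℂ, z ∉ (Set.Icc (A 1) (B 1)).image ((↑) : ℝ → ℂ) →
      z ∉ (Set.Icc (A j) (B j)).image ((↑) : ℝ → ℂ) →
      shatU σ 1 j z
        + ∑ i ∈ Finset.Icc 1 (j - 1), (-1 : ℂ) ^ i * shatU σ 1 (j - i) z * shatD σ j (j - i + 1) z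
        + (-1 : ℂ) ^ j * shatD σ j 1 z = 0 :=
  stmt12_general j hj A B hdisj σ hsupp
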